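/- arXiv:1905.09928 — 6 statements merged into one kernel-verified Lean document; each statement's English description precedes it below -/
import Mathlib

section
/- Let A be a Heyting algebra with Heyting implication ⇒, Ob its set of prime filters ordered by inclusion, and h(x) = {P : x ∈ P}. Then h(a ⇒ b) = I_R((−h(a)) ∪ h(b)), i.e., h preserves the Heyting implication into the implication on R-open sets of prime filters. -/
def IsPrimeFilter {A : Type*} [Lattice A] [OrderTop A] (P : Set A) : Prop :=
  ⊤ ∈ P ∧ (∀ a b, a ∈ P → b ∈ P → a ⊓ b ∈ P) ∧
    (∀ a b, a ∈ P → a ≤ b → b ∈ P) ∧ P ≠ Set.univ ∧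
    ∀ a b, a ⊔ b ∈ P → a ∈ P ∨ b ∈ P

def PF (A : Type*) [Lattice A] [OrderTop A] := {P : Set A // IsPrimeFilter P}

def IRpf {A : Type*} [Lattice A] [OrderTop A] (X : Set (PF A)) : Set (PF A) :=
  {Q | ∃ P : PF A, P.1 ⊆ Q.1 ∧ {Q' : PF A | P.1 ⊆ Q'.1} ⊆ X}

def hmap {A : Type*} [Lattice A] [OrderTop A] (x : A) : Set (PF A) :=
  {P : PF A | x ∈ P.1}

theorem hmap_preserves_himp {A : Type*} [HeytingAlgebra A] (a b : A) :
    hmap (a ⇨ b) = IRpf ((hmap a)ᶜ ∪ hmap b) := by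
  ext Q
  simp only [hmap, IRpf, Set.mem_setOf_eq, Set.mem_union, Set.mem_compl_iff]
  constructor
  · intro h
    refine ⟨Q, subset_rfl, fun Q' hQ' => ?_⟩
    by_cases ha : a ∈ Q'.1
    · right
      have : a ⊓ (a ⇨ b) ∈ Q'.1 := Q'.2.2.1 _ _ ha (hQ' h)
      exact Q'.2.2.2.1 _ b this (by rw [inf_himp]; exact inf_le_right)
    · left; exact ha
  · rintro ⟨P, hPQ, hX⟩
    by_contra hnot
    -- the filter generated by Q and a
    set F : Set A := {x | ∃ q ∈ Q.1, q ⊓ a ≤ x} with hF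
    have hFpf : Order.IsPFilter F := by
      refine Order.IsPFilter.of_def ⟨⊤, ⊤, Q.2.1, le_top⟩ ?_ ?_
      · rintro x ⟨q1, hq1, h1⟩ y ⟨q2, hq2, h2⟩
        exact ⟨x ⊓ y, ⟨q1 ⊓ q2, Q.2.2.1 _ _ hq1 hq2,
          le_inf (le_trans (inf_le_inf_right a inf_le_left) h1)
                 (le_trans (inf_le_inf_right a inf_le_right) h2)⟩,
          inf_le_left, inf_le_right⟩
      · rintro x y hxy ⟨q, hq, h⟩
        exact ⟨q, hq, h.trans hxy⟩
    have hdisj : Disjoint (hFpf.toPFilter : Set A) ((Order.Ideal.principal b : Order.Ideal A) : Set A) := by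
      rw [Set.disjoint_left]
      rintro x ⟨q, hq, hle⟩ (hxb : x ≤ b)
      exact hnot (Q.2.2.2.1 _ _ hq (le_himp_iff.2 (hle.trans hxb)))
    obtain ⟨J, hJprime, hbJ, hFJ⟩ :=
      DistribLattice.prime_ideal_of_disjoint_filter_ideal hdisj
    have hbmem : b ∈ J := hbJ (Order.Ideal.mem_principal.2 le_rfl)
    have hJc : IsPrimeFilter ((J : Set A)ᶜ) := by
      refine ⟨hJprime.top_notMem, ?_, ?_, ?_, ?_⟩
      · intro x y hx hy hxy
        rcases hJprime.mem_or_mem hxy with h | h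
        · exact hx h
        · exact hy h
      · intro x y hx hle hy
        exact hx (J.lower hle hy)
      · intro h
        exact (h ▸ Set.mem_univ b : b ∈ (J : Set A)ᶜ) hbmem
      · intro x y hxy
        by_contra hc
        push_neg at hc
        simp only [Set.mem_compl_iff, not_not] at hc
        exact hxy (Order.Ideal.sup_mem hc.1 hc.2)
    have hFsub : F ⊆ (J : Set A)ᶜ := fun x hx hxJ =>
      Set.disjoint_left.1 hFJ hx hxJ
    have hQF : Q.1 ⊆ F := fun q hq => ⟨q, hq, inf_le_left⟩
    have haF : a ∈ F := ⟨⊤, Q.2.1, inf_le_right⟩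
    have := hX (show P.1 ⊆ (⟨(J : Set A)ᶜ, hJc⟩ : PF A).1 from
      fun x hx => hFsub (hQF (hPQ hx)) )
    rcases this with h | h
    · exact h (hFsub haF)
    · exact h hbmem
end

section
/- Let A be a co-Heyting (Brouwer) algebra with pseudo-difference −̇, Ob its set of prime filters ordered by inclusion, and h(x) = {P : x ∈ P}. Then h(a −̇ b) = C_R(h(a) ∩ −h(b)), where C_R(X) = ⋃{R(P) : P ∈ X} and R(P) = {Q : P ⊆ Q}. -/
/-- The closure operator on sets of prime filters induced by inclusion. -/
def CRpf {A : Type*} [Lattice A] [OrderTop A] (X : Set (PF A)) : Set (PF A) :=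
  {Q | ∃ P : PF A, P ∈ X ∧ P.1 ⊆ Q.1}

theorem hmap_preserves_sdiff {A : Type*} [CoheytingAlgebra A] (a b : A) :
    hmap (a \ b) = CRpf (hmap a ∩ (hmap b)ᶜ) := by
  ext Q
  obtain ⟨Qtop, Qinf, Qup, Qne, Qprime⟩ := Q.2
  constructor
  · intro hQ
    -- hQ : a \ b ∈ Q.1
    -- the complement of Q is an ideal
    have hQcI : Order.IsIdeal Q.1ᶜ := by
      refine ⟨fun x y hyx hx hy => hx (Qup y x hy hyx), ?_, ?_⟩
      · rcases Set.ne_univ_iff_exists_notMem _ |>.1 Qne with ⟨x, hx⟩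
        exact ⟨x, hx⟩
      · intro x hx y hy
        refine ⟨x ⊔ y, fun h => ?_, le_sup_left, le_sup_right⟩
        rcases Qprime x y h with h' | h' <;> [exact hx h'; exact hy h']
    set I : Order.Ideal A := hQcI.toIdeal ⊔ Order.Ideal.principal b with hI
    have hdisj : Disjoint ((Order.PFilter.principal a : Order.PFilter A) : Set A)
        (I : Set A) := by
      rw [Set.disjoint_left]
      intro x hxF hxI
      have hax : a ≤ x := hxF
      rcases (DistribLattice.mem_ideal_sup_principal b x hQcI.toIdeal).1 hxI with
        ⟨j, hj, hxj⟩
      have : a ≤ b ⊔ j := le_trans hax (le_trans hxj (by rw [sup_comm]))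
      have hab : a \ b ≤ j := sdiff_le_iff.2 this
      exact hj (Qup _ _ hQ hab)
    obtain ⟨J, hJprime, hIJ, hJdisj⟩ :=
      DistribLattice.prime_ideal_of_disjoint_filter_ideal hdisj
    have haJ : a ∉ (J : Set A) := fun h =>
      Set.disjoint_left.1 hJdisj (le_refl a) h
    have hbJ : b ∈ (J : Set A) := hIJ (le_sup_right (α := Order.Ideal A)
      (Order.Ideal.mem_principal.2 le_rfl))
    have hQJ : Q.1ᶜ ⊆ (J : Set A) := fun x hx =>
      hIJ (le_sup_left (α := Order.Ideal A) (show x ∈ hQcI.toIdeal from hx))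
    have hPF : IsPrimeFilter ((J : Set A)ᶜ) := by
      refine ⟨fun h => haJ (J.lower le_top h), ?_, ?_, ?_, ?_⟩
      · intro x y hx hy
        intro h
        rcases hJprime.mem_or_mem h with h' | h' <;> [exact hx h'; exact hy h']
      · intro x y hx hxy h
        exact hx (J.lower hxy h)
      · intro h
        have : b ∈ (J : Set A)ᶜ := h ▸ Set.mem_univ b
        exact this hbJ
      · intro x y hxy
        by_contra h
        push_neg at h
        simp only [Set.mem_compl_iff, not_not] at h
        exact hxy (Order.Ideal.sup_mem h.1 h.2)
    refine ⟨⟨(J : Set A)ᶜ, hPF⟩, ⟨haJ, fun h => h hbJ⟩, ?_⟩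
    intro x hx
    by_contra hxQ
    exact hx (hQJ hxQ)
  · rintro ⟨P, ⟨haP, hbP⟩, hPQ⟩
    obtain ⟨_, _, Pup, _, Pprime⟩ := P.2
    have hmem : b ⊔ a \ b ∈ P.1 := Pup a _ haP (sdiff_le_iff.1 le_rfl)
    rcases Pprime _ _ hmem with h | h
    · exact absurd h hbP
    · exact hPQ h
end

section
/- Let A be a De Morgan algebra, Ob its prime filters ordered by inclusion, φ the Białynicki-Birula–Rasiowa involution, and define ∼X = −φ[X] for X ⊆ Ob (where φ[X] is the image of X under φ). If G ⊆ Ob is R-open (I_R(G) = G with R = ⊆), then ∼G is also R-open. -/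
theorem deMorgan_neg_of_Ropen_is_Ropen {A : Type*} [DistribLattice A] [BoundedOrder A]
    (dm : A → A) (hdm1 : ∀ a, dm (dm a) = a)
    (hdm2 : ∀ a b, dm (a ⊓ b) = dm a ⊔ dm b)
    (φ : PF A → PF A) (hφ : ∀ P : PF A, (φ P).1 = {a | dm a ∉ P.1})
    (G : Set (PF A)) (hG : IRpf G = G) :
    IRpf ((φ '' G)ᶜ) = (φ '' G)ᶜ := by
  have hiter : ∀ P : PF A, φ (φ P) = P := by
    intro P
    apply Subtype.ext
    rw [hφ, hφ]
    ext a
    simp [hdm1]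
  have hanti : ∀ P Q : PF A, P.1 ⊆ Q.1 → (φ Q).1 ⊆ (φ P).1 := by
    intro P Q h a ha
    rw [hφ] at ha ⊢
    exact fun hc => ha (h hc)
  ext Q
  constructor
  · rintro ⟨P, hPQ, hup⟩
    exact hup hPQ
  · intro hQ
    refine ⟨Q, subset_rfl, ?_⟩
    rintro Q' hQQ' ⟨S, hSG, hSQ'⟩
    apply hQ
    have hSφQ : S.1 ⊆ (φ Q).1 := by
      have h2 := hanti Q Q' hQQ'
      rw [← hSQ', hiter] at h2
      exact h2
    have hmem : φ Q ∈ G := by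
      rw [← hG] at hSG ⊢
      obtain ⟨P, hPS, hupP⟩ := hSG
      exact ⟨P, hPS.trans hSφQ, hupP⟩
    exact ⟨φ Q, hmem, hiter Q⟩
end

section
/- Let A be a Kleene algebra (De Morgan algebra with a ∧ ∼a ≤ b ∨ ∼b for all a, b). Then the Białynicki-Birula–Rasiowa involution φ on the prime filters of A satisfies: for every prime filter P, P ⊆ φ(P) or φ(P) ⊆ P. -/
theorem kleene_bbr_comparable {A : Type*} [DistribLattice A] [BoundedOrder A]
    (dm : A → A) (hdm1 : ∀ a, dm (dm a) = a)
    (hdm2 : ∀ a b, dm (a ⊓ b) = dm a ⊔ dm b)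
    (hK : ∀ a b : A, a ⊓ dm a ≤ b ⊔ dm b) :
    ∀ P : Set A, IsPrimeFilter P →
      P ⊆ {a | dm a ∉ P} ∨ {a | dm a ∉ P} ⊆ P := by
  intro P hP
  obtain ⟨-, hmeet, hup, -, hprime⟩ := hP
  by_contra h
  push_neg at h
  obtain ⟨h1', h2'⟩ := h
  obtain ⟨a, haP, hda⟩ := Set.not_subset.mp h1'
  obtain ⟨b, hdb, hbP⟩ := Set.not_subset.mp h2'
  simp only [Set.mem_setOf_eq, not_not] at hda hdb
  have h1 : a ⊓ dm a ∈ P := hmeet _ _ haP hda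
  have h2 : b ⊔ dm b ∈ P := hup _ _ h1 (hK a b)
  rcases hprime _ _ h2 with h3 | h3
  · exact hbP h3
  · exact hdb h3
end

section
/- Let L be a Heyting algebra with a De Morgan involution ∼ satisfying the Kleene condition x ∧ ∼x ≤ y ∨ ∼y. Define the weak implication x →w y := x ⇒ (∼x ∨ y). Then: (M1) x →w x = ⊤; (M2) x ∧ (x →w y) = x ∧ (∼x ∨ y); and (M3) x →w (y →w z) ≤ (x ∧ y) →w z. -/
theorem weak_implication_properties {L : Type*} [HeytingAlgebra L]
    (dm : L → L) (hdm1 : ∀ x, dm (dm x) = x)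
    (hdm2 : ∀ x y, dm (x ⊓ y) = dm x ⊔ dm y)
    (hK : ∀ x y : L, x ⊓ dm x ≤ y ⊔ dm y) (x y z : L) :
    x ⇨ (dm x ⊔ x) = ⊤ ∧
    x ⊓ (x ⇨ (dm x ⊔ y)) = x ⊓ (dm x ⊔ y) ∧
    x ⇨ (dm x ⊔ (y ⇨ (dm y ⊔ z))) ≤ (x ⊓ y) ⇨ (dm (x ⊓ y) ⊔ z) := by
  refine ⟨himp_eq_top_iff.2 le_sup_right, inf_himp x _, ?_⟩
  rw [le_himp_iff, hdm2]
  have h1 : (x ⇨ (dm x ⊔ (y ⇨ (dm y ⊔ z)))) ⊓ x ≤ dm x ⊔ (y ⇨ (dm y ⊔ z)) :=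
    himp_inf_le
  calc (x ⇨ (dm x ⊔ (y ⇨ (dm y ⊔ z)))) ⊓ (x ⊓ y)
      ≤ (dm x ⊔ (y ⇨ (dm y ⊔ z))) ⊓ y := by
        rw [← inf_assoc]; exact inf_le_inf_right y h1
    _ = (dm x ⊓ y) ⊔ ((y ⇨ (dm y ⊔ z)) ⊓ y) := inf_sup_right _ _ _
    _ ≤ dm x ⊔ (dm y ⊔ z) := sup_le_sup inf_le_left himp_inf_le
    _ = dm x ⊔ dm y ⊔ z := (sup_assoc ..).symm
end

section
/- In a Nelson algebra A, for every pair of prime filters P, Q with P ⊆ φ(P), Q ⊆ φ(Q), and P ⊆ φ(Q), the deductive system generated by P ∪ Q is proper, and hence there is a prime filter M with P ⊆ M, Q ⊆ M, M ⊆ φ(P), and M ⊆ φ(Q) (the interpolation property of φ). -/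
/-- A deductive system w.r.t. the weak implication `wimp`. -/
def IsDedSys {A : Type*} [Lattice A] [OrderTop A] (wimp : A → A → A) (D : Set A) : Prop :=
  ⊤ ∈ D ∧ ∀ a b, a ∈ D → wimp a b ∈ D → b ∈ D

/-- The deductive system generated by a set. -/
def genDed {A : Type*} [Lattice A] [OrderTop A] (wimp : A → A → A) (X : Set A) : Set A :=
  ⋂₀ {D : Set A | IsDedSys wimp D ∧ X ⊆ D}

/-- The Białynicki-Birula–Rasiowa map. -/
def bbr {A : Type*} (dm : A → A) (P : Set A) : Set A := {a | dm a ∉ P}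

theorem nelson_interpolation {A : Type*} [DistribLattice A] [BoundedOrder A]
    (dm : A → A) (wimp : A → A → A)
    (hdm1 : ∀ a, dm (dm a) = a)
    (hdm2 : ∀ a b, dm (a ⊓ b) = dm a ⊔ dm b)
    (hK : ∀ a b : A, a ⊓ dm a ≤ b ⊔ dm b)
    (htop : dm (⊤ : A) = ⊥)
    (hN1 : ∀ a, wimp a a = ⊤)
    (hN2 : ∀ a b, a ⊓ wimp a b = a ⊓ (dm a ⊔ b))
    (hN3 : ∀ a b c, wimp a (wimp b c) = wimp (a ⊓ b) c)
    (hRas : ∀ a b : A, wimp (a ⊓ dm a) b = ⊤)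
    (hExt : ∀ (D : Set A) (a : A), IsDedSys wimp D → a ∉ D →
      ∃ M : Set A, IsPrimeFilter M ∧ IsDedSys wimp M ∧ D ⊆ M ∧ a ∉ M)
    (P Q : Set A) (hP : IsPrimeFilter P) (hQ : IsPrimeFilter Q)
    (hPφP : P ⊆ bbr dm P) (hQφQ : Q ⊆ bbr dm Q) (hPφQ : P ⊆ bbr dm Q) :
    genDed wimp (P ∪ Q) ≠ Set.univ ∧
    ∃ M : Set A, IsPrimeFilter M ∧ P ⊆ M ∧ Q ⊆ M ∧
      M ⊆ bbr dm P ∧ M ⊆ bbr dm Q := by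
  classical
  obtain ⟨hPtop, hPinf, hPup, hPne, hPpr⟩ := hP
  obtain ⟨hQtop, hQinf, hQup, hQne, hQpr⟩ := hQ
  -- `dm` is antitone
  have hanti : ∀ a b : A, a ≤ b → dm b ≤ dm a := by
    intro a b hab
    have h1 : dm (a ⊓ b) = dm a ⊔ dm b := hdm2 a b
    rw [inf_eq_left.mpr hab] at h1
    exact le_trans le_sup_right h1.ge
  have hbot : dm (⊥ : A) = ⊤ := by
    have := hdm1 ⊤; rw [htop] at this; exact this
  -- the key lemma (†)
  have hkey : ∀ p ∈ P, ∀ q ∈ Q, ¬ (p ⊓ q ≤ dm (p ⊓ q)) := by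
    intro p hp q hq hle
    have hx : p ⊓ q ⊓ dm (p ⊓ q) = p ⊓ q := inf_eq_left.mpr hle
    have hw : wimp (p ⊓ q) ⊥ = ⊤ := by
      have := hRas (p ⊓ q) ⊥
      rwa [hx] at this
    have h1 : wimp p (wimp q ⊥) = ⊤ := by rw [hN3, hw]
    have h2 : p ≤ dm p ⊔ wimp q ⊥ := by
      have h := hN2 p (wimp q ⊥)
      rw [h1, inf_top_eq] at h
      exact le_of_eq_of_le h inf_le_right
    have h3 : dm p ⊔ wimp q ⊥ ∈ P := hPup p _ hp h2
    have h4 : wimp q ⊥ ∈ P := by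
      rcases hPpr _ _ h3 with h | h
      · exact absurd h (hPφP hp)
      · exact h
    have h5 : q ⊓ wimp q ⊥ = q ⊓ dm q := by
      have h := hN2 q ⊥
      rwa [sup_bot_eq] at h
    have h6 : dm q ⊔ dm (wimp q ⊥) = dm q ⊔ q := by
      have e1 : dm (q ⊓ wimp q ⊥) = dm q ⊔ dm (wimp q ⊥) := hdm2 _ _
      have e2 : dm (q ⊓ dm q) = dm q ⊔ q := by rw [hdm2, hdm1]
      rw [h5, e2] at e1
      exact e1.symm
    have h7 : dm q ⊔ dm (wimp q ⊥) ∈ Q := by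
      rw [h6]; exact hQup q _ hq le_sup_right
    rcases hQpr _ _ h7 with h | h
    · exact (hQφQ hq) h
    · exact (hPφQ h4) h
  -- the filter generated by P ∪ Q
  set Fset : Set A := {c : A | ∃ p ∈ P, ∃ q ∈ Q, p ⊓ q ≤ c} with hFdef
  have hFilt : Order.IsPFilter Fset := by
    refine Order.IsPFilter.of_def ⟨⊤, ⟨⊤, hPtop, ⊤, hQtop, le_top⟩⟩ ?_ ?_
    · rintro x ⟨p, hp, q, hq, hpq⟩ y ⟨p', hp', q', hq', hpq'⟩
      refine ⟨x ⊓ y, ⟨p ⊓ p', hPinf _ _ hp hp', q ⊓ q', hQinf _ _ hq hq', ?_⟩,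
        inf_le_left, inf_le_right⟩
      refine le_inf (le_trans ?_ hpq) (le_trans ?_ hpq')
      · exact inf_le_inf inf_le_left inf_le_left
      · exact inf_le_inf inf_le_right inf_le_right
    · rintro x y hxy ⟨p, hp, q, hq, hpq⟩
      exact ⟨p, hp, q, hq, le_trans hpq hxy⟩
  -- the ideal of elements below their De Morgan dual
  set Jset : Set A := {x : A | x ≤ dm x} with hJdef
  have hdmsup : ∀ a b : A, dm (a ⊔ b) = dm a ⊓ dm b := by
    intro a b
    have h := hdm2 (dm a) (dm b)
    rw [hdm1, hdm1] at h
    have h2 := congrArg dm h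
    rw [hdm1] at h2
    exact h2.symm
  have hIdl : Order.IsIdeal Jset := by
    refine ⟨?_, ⟨⊥, by simp only [hJdef, Set.mem_setOf_eq, hbot]; exact le_top⟩, ?_⟩
    · rintro x y hyx hx
      exact le_trans hyx (le_trans hx (hanti _ _ hyx))
    · rintro x hx y hy
      refine ⟨x ⊔ y, ?_, le_sup_left, le_sup_right⟩
      rw [hJdef, Set.mem_setOf_eq, hdmsup]
      have hx' : x ≤ dm x := hx
      have hy' : y ≤ dm y := hy
      have hxy : x ≤ dm y := by
        have h1 : x ⊓ dm x = x := inf_eq_left.mpr hx'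
        have h2 : y ⊔ dm y = dm y := sup_eq_right.mpr hy'
        have := hK x y
        rw [h1, h2] at this
        exact this
      have hyx : y ≤ dm x := by
        have h1 : y ⊓ dm y = y := inf_eq_left.mpr hy'
        have h2 : x ⊔ dm x = dm x := sup_eq_right.mpr hx'
        have := hK y x
        rw [h1, h2] at this
        exact this
      exact sup_le (le_inf hx' hxy) (le_inf hyx hy')
  have hdisj : Disjoint ((hFilt.toPFilter : Order.PFilter A) : Set A)
      ((hIdl.toIdeal : Order.Ideal A) : Set A) := by
    rw [Set.disjoint_left]
    rintro c ⟨p, hp, q, hq, hpq⟩ hcJ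
    have hcdm : c ≤ dm c := hcJ
    exact hkey p hp q hq (le_trans hpq (le_trans hcdm (hanti _ _ hpq)))
  obtain ⟨J', hJ'prime, hJJ', hFJ'⟩ :=
    DistribLattice.prime_ideal_of_disjoint_filter_ideal hdisj
  -- R: complement of the prime ideal J'
  set R : Set A := (J' : Set A)ᶜ with hRdef
  have hFR : ∀ c : A, (∃ p ∈ P, ∃ q ∈ Q, p ⊓ q ≤ c) → c ∈ R := by
    intro c hc
    exact Set.disjoint_left.mp hFJ' (by exact hc)
  have hPR : P ⊆ R := fun p hp => hFR p ⟨p, hp, ⊤, hQtop, inf_le_left⟩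
  have hQR : Q ⊆ R := fun q hq => hFR q ⟨⊤, hPtop, q, hq, inf_le_right⟩
  have hRup : ∀ a b : A, a ∈ R → a ≤ b → b ∈ R := by
    intro a b ha hab hb
    exact ha (J'.lower hab hb)
  have hRinf : ∀ a b : A, a ∈ R → b ∈ R → a ⊓ b ∈ R := by
    intro a b ha hb hab
    rcases hJ'prime.mem_or_mem hab with h | h
    · exact ha h
    · exact hb h
  have hRpr : ∀ a b : A, a ⊔ b ∈ R → a ∈ R ∨ b ∈ R := by
    intro a b hab
    by_contra h
    push_neg at h
    obtain ⟨h1, h2⟩ := h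
    exact hab (Order.Ideal.sup_mem (not_not.mp h1) (not_not.mp h2))
  have hbotR : (⊥ : A) ∉ R := by
    intro h
    exact h (hJJ' (show (⊥ : A) ∈ Jset by
      simp only [hJdef, Set.mem_setOf_eq, hbot]; exact le_top))
  -- R is consistent
  have hRcons : ∀ a : A, a ∈ R → dm a ∉ R := by
    intro a ha hda
    have h1 : a ⊓ dm a ∈ R := hRinf _ _ ha hda
    have h2 : a ⊓ dm a ∈ Jset := by
      simp only [hJdef, Set.mem_setOf_eq, hdm2, hdm1]
      exact le_trans inf_le_right le_sup_left
    exact h1 (hJJ' h2)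
  -- R is a deductive system
  have hRded : IsDedSys wimp R := by
    constructor
    · exact hFR ⊤ ⟨⊤, hPtop, ⊤, hQtop, le_top⟩
    · intro a b ha hw
      have h1 : a ⊓ wimp a b ∈ R := hRinf _ _ ha hw
      rw [hN2] at h1
      have h2 : dm a ⊔ b ∈ R := hRup _ _ h1 inf_le_right
      rcases hRpr _ _ h2 with h | h
      · exact absurd h (hRcons a ha)
      · exact h
  have hRmem : R ∈ {D : Set A | IsDedSys wimp D ∧ P ∪ Q ⊆ D} := by
    refine ⟨hRded, ?_⟩
    rintro a (ha | ha)
    · exact hPR ha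
    · exact hQR ha
  have hgenR : genDed wimp (P ∪ Q) ⊆ R := Set.sInter_subset_of_mem hRmem
  have hbotgen : (⊥ : A) ∉ genDed wimp (P ∪ Q) := fun h => hbotR (hgenR h)
  have hgenDed : IsDedSys wimp (genDed wimp (P ∪ Q)) := by
    constructor
    · intro D hD
      exact hD.1.1
    · intro a b ha hw D hD
      exact hD.1.2 a b (ha D hD) (hw D hD)
  obtain ⟨M, hMprime, hMded, hgenM, hbotM⟩ :=
    hExt (genDed wimp (P ∪ Q)) ⊥ hgenDed hbotgen
  have hPgen : P ⊆ genDed wimp (P ∪ Q) := by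
    intro p hp D hD
    exact hD.2 (Or.inl hp)
  have hQgen : Q ⊆ genDed wimp (P ∪ Q) := by
    intro q hq D hD
    exact hD.2 (Or.inr hq)
  have hMcons : ∀ (X : Set A), X ⊆ genDed wimp (P ∪ Q) → M ⊆ bbr dm X := by
    intro X hX m hm hdmX
    have hdmM : dm m ∈ M := hgenM (hX hdmX)
    have h1 : m ⊓ dm m ∈ M := hMprime.2.1 _ _ hm hdmM
    have h2 : wimp (m ⊓ dm m) ⊥ ∈ M := by
      rw [hRas]
      exact hMprime.1
    exact hbotM (hMded.2 _ _ h1 h2)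
  constructor
  · intro h
    exact hbotgen (h ▸ Set.mem_univ (⊥ : A))
  · exact ⟨M, hMprime, fun p hp => hgenM (hPgen hp), fun q hq => hgenM (hQgen hq),
      hMcons P hPgen, hMcons Q hQgen⟩
end
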